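/- Let a ∈ (−1,1), m₁, m₂, f ∈ ℝ, Z̃₁ = (0,a), Z̃₂ = (0,−a), Z₁ = (0,a,−1)/√(1−a²), Z₂ = (0,−a,−1)/√(1−a²), Z₀ = (0,0,−1), and m̂ᵢ = √(1−a²)·mᵢ. Suppose q̃ : I → D \ {Z̃₁, Z̃₂} is a C² curve satisfying the planar Lagrange equation d²q̃/dt² = −m₁(‖q̃−Z̃₁‖ₐ⁻)^{−3}(q̃−Z̃₁) − m₂(‖q̃−Z̃₂‖ₐ⁻)^{−3}(q̃−Z̃₂) + 2f·q̃. Let τ ↦ t(τ) solve dt/dτ = 1 − x̃(t)² − ỹ(t)² and set q(τ) := π_H(q̃(t(τ))). Then for every τ, q''(τ) + η(q''(τ), q(τ)) q(τ) = m̂₁(η(q,Z₁)²−1)^{−3/2}(Z₁ + η(q,Z₁)q) + m̂₂(η(q,Z₂)²−1)^{−3/2}(Z₂ + η(q,Z₂)q) + 2f η(q,Z₀)^{−3}(Z₀ + η(q,Z₀)q); i.e., the central projection carries solutions of the planar Lagrange problem to solutions of the hyperbolic Lagrange problem with force function m̂₁ coth θ_{Z₁} + m̂₂ coth θ_{Z₂}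 + f tanh² θ_{Z₀}. -/

import Mathlib

noncomputable section

/-- The Minkowski form `η(u,v) = u₁v₁ + u₂v₂ - u₃v₃` on `ℝ³ = ℝ × ℝ × ℝ`. -/
def eta (u v : ℝ × ℝ × ℝ) : ℝ := u.1 * v.1 + u.2.1 * v.2.1 - u.2.2 * v.2.2

/-- The affine norm `‖(x,y)‖ₐ⁻ = √(x² + y²/(1-a²))` on the plane. -/
def normAm (a : ℝ) (p : ℝ × ℝ) : ℝ := Real.sqrt (p.1 ^ 2 + p.2 ^ 2 / (1 - a ^ 2))

/-- Central projection from the unit disc in the plane `{z = -1}` onto the lower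
sheet of the hyperboloid `η(q,q) = -1`. -/
def centralProjH (p : ℝ × ℝ) : ℝ × ℝ × ℝ :=
  (Real.sqrt (1 - p.1 ^ 2 - p.2 ^ 2))⁻¹ • (p.1, p.2, (-1 : ℝ))

/-!
Write `ρ(p) = 1 - |p|²`, so that `(p, -1) = √ρ(p) • π_H(p)`. Differentiating twice, the time
change `dt/dτ = ρ` makes every first-order term fall into the normal direction: the acceleration
of `q = π_H ∘ q̃ ∘ t` is `ρ^{3/2} • (q̃'', 0)` plus a multiple of `q`. The Minkowski-tangential
projection at `q` kills `q`, and it sends `(q̃ - Z̃, 0) = √ρ • q - √ρ(Z̃) • π_H(Z̃)` to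
`-√(1 - a²)` times the projection of `Z = π_H(Z̃)`. The coefficients then match because of the
identity `(1 - p·c)² - ρ(p) ρ(c) = ρ(c) ‖p - c‖ₐ²` for `c = (0, ±a)`, which says
`η(q, Z)² - 1 = ‖q̃ - Z̃‖ₐ² / ρ`, and because `η(q, Z₀) = -ρ^{-1/2}`.
-/

open Real

def liftPlane : ℝ × ℝ →L[ℝ] ℝ × ℝ × ℝ :=
  (ContinuousLinearMap.fst ℝ ℝ ℝ).prod ((ContinuousLinearMap.snd ℝ ℝ ℝ).prod 0)

@[simp]
lemma liftPlane_apply (p : ℝ × ℝ) : liftPlane p = (p.1, p.2, 0) := rfl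

def planeDot (u v : ℝ × ℝ) : ℝ := u.1 * v.1 + u.2 * v.2

def discWeight (p : ℝ × ℝ) : ℝ := 1 - p.1 ^ 2 - p.2 ^ 2

lemma eta_comm (u v : ℝ × ℝ × ℝ) : eta u v = eta v u := by
  unfold eta; ring

def tangentProj (q : ℝ × ℝ × ℝ) : (ℝ × ℝ × ℝ) →ₗ[ℝ] ℝ × ℝ × ℝ where
  toFun v := v + eta v q • q
  map_add' u v := by
    ext <;> simp only [eta, Prod.fst_add, Prod.snd_add, Prod.smul_fst, Prod.smul_snd, smul_eq_mul]
      <;> ring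
  map_smul' c v := by
    ext <;> simp only [eta, Prod.fst_add, Prod.snd_add, Prod.smul_fst, Prod.smul_snd, smul_eq_mul,
      RingHom.id_apply] <;> ring

lemma tangentProj_apply (q v : ℝ × ℝ × ℝ) : tangentProj q v = v + eta v q • q := rfl

lemma tangentProj_apply_comm (q v : ℝ × ℝ × ℝ) : tangentProj q v = v + eta q v • q := by
  rw [tangentProj_apply, eta_comm]

lemma tangentProj_self {q : ℝ × ℝ × ℝ} (hq : eta q q = -1) : tangentProj q q = 0 := by
  rw [tangentProj_apply, hq, neg_one_smul, add_neg_cancel]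

lemma sqrt_discWeight_smul_centralProjH {p : ℝ × ℝ} (hp : 0 < discWeight p) :
    √(discWeight p) • centralProjH p = liftPlane p + (0, 0, -1) := by
  rw [centralProjH, ← discWeight, smul_inv_smul₀ (sqrt_pos.2 hp).ne']
  simp

lemma eta_centralProjH (p c : ℝ × ℝ) :
    eta (centralProjH p) (centralProjH c)
      = (planeDot p c - 1) / (√(discWeight p) * √(discWeight c)) := by
  simp only [centralProjH, eta, planeDot, discWeight, Prod.smul_mk, smul_eq_mul]
  ring

lemma eta_centralProjH_self {p : ℝ × ℝ} (hp : 0 < discWeight p) :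
    eta (centralProjH p) (centralProjH p) = -1 := by
  rw [eta_centralProjH, ← sq, sq_sqrt hp.le, div_eq_iff hp.ne']
  simp only [planeDot, discWeight]
  ring

lemma eta_centralProjH_apex (p : ℝ × ℝ) :
    eta (centralProjH p) (0, 0, -1) = -(√(discWeight p))⁻¹ := by
  simp only [centralProjH, eta, discWeight, Prod.smul_mk, smul_eq_mul]
  ring

lemma discWeight_axis (b : ℝ) : discWeight (0, b) = 1 - b ^ 2 := by
  simp [discWeight]

lemma centralProjH_axis (b : ℝ) :
    centralProjH (0, b) = (√(1 - b ^ 2))⁻¹ • ((0 : ℝ), b, (-1 : ℝ)) := by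
  simp [centralProjH]

lemma normAm_sq {b : ℝ} (hb : b ^ 2 < 1) (v : ℝ × ℝ) :
    normAm b v ^ 2 = v.1 ^ 2 + v.2 ^ 2 / (1 - b ^ 2) := by
  have hb' : 0 < 1 - b ^ 2 := by linarith
  exact sq_sqrt (by positivity)

lemma normAm_pos {b : ℝ} (hb : b ^ 2 < 1) {v : ℝ × ℝ} (hv : v ≠ 0) : 0 < normAm b v := by
  have hb' : 0 < 1 - b ^ 2 := by linarith
  refine sqrt_pos.2 ?_
  obtain ⟨x, y⟩ := v
  change 0 < x ^ 2 + y ^ 2 / (1 - b ^ 2)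
  rcases eq_or_ne x 0 with rfl | hx
  · have hy : y ≠ 0 := fun hy => hv (by simp [hy])
    positivity
  · have := div_nonneg (sq_nonneg y) hb'.le
    positivity

lemma normAm_neg (a : ℝ) : normAm (-a) = normAm a := by
  funext v; simp [normAm]

lemma eta_centralProjH_axis_sq_sub_one {b : ℝ} (hb : b ^ 2 < 1) {p : ℝ × ℝ}
    (hp : 0 < discWeight p) :
    eta (centralProjH p) (centralProjH (0, b)) ^ 2 - 1
      = (normAm b (p - (0, b)) / √(discWeight p)) ^ 2 := by
  have hb' : 0 < 1 - b ^ 2 := by linarith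
  rw [eta_centralProjH, discWeight_axis, div_pow, mul_pow, div_pow, sq_sqrt hp.le, sq_sqrt hb'.le,
    normAm_sq hb]
  simp only [planeDot, discWeight, Prod.fst_sub, Prod.snd_sub] at hp ⊢
  field_simp
  ring

lemma rpow_sq_neg_three_halves {x : ℝ} (hx : 0 ≤ x) : (x ^ 2) ^ (-(3 : ℝ) / 2) = (x ^ 3)⁻¹ := by
  rw [← rpow_natCast x 2, ← rpow_mul hx]
  norm_num

lemma liftPlane_sub {p c : ℝ × ℝ} (hp : 0 < discWeight p) (hc : 0 < discWeight c) :
    liftPlane (p - c) = √(discWeight p) • centralProjH p - √(discWeight c) • centralProjH c := by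
  rw [sqrt_discWeight_smul_centralProjH hp, sqrt_discWeight_smul_centralProjH hc, map_sub]
  abel

lemma tangentProj_liftPlane_sub {p c : ℝ × ℝ} (hp : 0 < discWeight p) (hc : 0 < discWeight c) :
    tangentProj (centralProjH p) (liftPlane (p - c))
      = -(√(discWeight c) • tangentProj (centralProjH p) (centralProjH c)) := by
  rw [liftPlane_sub hp hc, map_sub, map_smul, map_smul,
    tangentProj_self (eta_centralProjH_self hp), smul_zero, zero_sub]

lemma tangentProj_liftPlane_keplerTerm {b : ℝ} (hb : b ^ 2 < 1) {p : ℝ × ℝ}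
    (hp : 0 < discWeight p) (hpb : p ≠ (0, b)) (m : ℝ) :
    √(discWeight p) ^ 3 • tangentProj (centralProjH p)
        (liftPlane ((m / normAm b (p - (0, b)) ^ 3) • (p - (0, b))))
      = -((√(1 - b ^ 2) * m
          * (eta (centralProjH p) (centralProjH (0, b)) ^ 2 - 1) ^ (-(3 : ℝ) / 2))
          • tangentProj (centralProjH p) (centralProjH (0, b))) := by
  have hc : 0 < discWeight (0, b) := by rw [discWeight_axis]; linarith
  have hN := normAm_pos hb (sub_ne_zero.2 hpb)
  have hσ := sqrt_pos.2 hp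
  rw [map_smul, map_smul, tangentProj_liftPlane_sub hp hc, discWeight_axis,
    eta_centralProjH_axis_sq_sub_one hb hp, rpow_sq_neg_three_halves (by positivity),
    smul_neg, smul_neg, smul_smul, smul_smul]
  congr 2
  field_simp

lemma tangentProj_liftPlane_hookeTerm {p : ℝ × ℝ} (hp : 0 < discWeight p) (k : ℝ) :
    √(discWeight p) ^ 3 • tangentProj (centralProjH p) (liftPlane (k • p))
      = (k / eta (centralProjH p) (0, 0, -1) ^ 3)
          • tangentProj (centralProjH p) ((0 : ℝ), (0 : ℝ), (-1 : ℝ)) := by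
  have hlift : liftPlane p = √(discWeight p) • centralProjH p - (0, 0, -1) := by
    rw [sqrt_discWeight_smul_centralProjH hp]
    abel
  have hσ := sqrt_pos.2 hp
  rw [map_smul, hlift, map_smul, map_sub, map_smul, tangentProj_self (eta_centralProjH_self hp),
    smul_zero, zero_sub, eta_centralProjH_apex, smul_neg, smul_neg, smul_smul, ← neg_smul]
  congr 1
  field_simp

lemma HasDerivAt.fst {𝕜 E F : Type*} [NontriviallyNormedField 𝕜] [NormedAddCommGroup E]
    [NormedSpace 𝕜 E] [NormedAddCommGroup F] [NormedSpace 𝕜 F] {f : 𝕜 → E × F} {v : E × F}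
    {x : 𝕜} (h : HasDerivAt f v x) : HasDerivAt (fun y => (f y).1) v.1 x := by
  simpa using h.hasFDerivAt.fst.hasDerivAt

lemma HasDerivAt.snd {𝕜 E F : Type*} [NontriviallyNormedField 𝕜] [NormedAddCommGroup E]
    [NormedSpace 𝕜 E] [NormedAddCommGroup F] [NormedSpace 𝕜 F] {f : 𝕜 → E × F} {v : E × F}
    {x : 𝕜} (h : HasDerivAt f v x) : HasDerivAt (fun y => (f y).2) v.2 x := by
  simpa using h.hasFDerivAt.snd.hasDerivAt

lemma HasDerivAt.planeDot {p q : ℝ → ℝ × ℝ} {v w : ℝ × ℝ} {s : ℝ} (hp : HasDerivAt p v s)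
    (hq : HasDerivAt q w s) :
    HasDerivAt (fun s => planeDot (p s) (q s)) (planeDot v (q s) + planeDot (p s) w) s := by
  refine ((hp.fst.mul hq.fst).add (hp.snd.mul hq.snd)).congr_deriv ?_
  simp only [_root_.planeDot]
  ring

lemma discWeight_eq_one_sub_planeDot (p : ℝ × ℝ) : discWeight p = 1 - planeDot p p := by
  simp only [discWeight, planeDot]
  ring

lemma hasDerivAt_sqrt_discWeight {p : ℝ → ℝ × ℝ} {v : ℝ × ℝ} {s : ℝ} (hp : HasDerivAt p v s)
    (hρ : 0 < discWeight (p s)) :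
    HasDerivAt (fun s => √(discWeight (p s))) (-planeDot (p s) v / √(discWeight (p s))) s := by
  simp only [discWeight_eq_one_sub_planeDot] at hρ ⊢
  refine (((hp.planeDot hp).const_sub 1).sqrt hρ.ne').congr_deriv ?_
  field_simp
  simp only [planeDot]
  ring

lemma hasDerivAt_centralProjH {p : ℝ → ℝ × ℝ} {v : ℝ × ℝ} {s : ℝ} (hp : HasDerivAt p v s)
    (hρ : 0 < discWeight (p s)) :
    HasDerivAt (fun s => centralProjH (p s))
      ((√(discWeight (p s)))⁻¹ • liftPlane v
        + (planeDot (p s) v / discWeight (p s)) • centralProjH (p s)) s := by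
  have hσ := sqrt_pos.2 hρ
  have hproj : (fun s => centralProjH (p s))
      = fun s => (√(discWeight (p s)))⁻¹ • (liftPlane (p s) + (0, 0, -1)) := by
    funext s
    simp [centralProjH, discWeight]
  have hlift := (liftPlane.hasFDerivAt.comp_hasDerivAt s hp).add_const ((0 : ℝ), (0 : ℝ), (-1 : ℝ))
  rw [hproj]
  refine (((hasDerivAt_sqrt_discWeight hp hρ).inv hσ.ne').smul hlift).congr_deriv ?_
  simp only [Function.comp_apply, Pi.inv_apply]
  rw [← sqrt_discWeight_smul_centralProjH hρ, smul_smul]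
  congr 2
  field_simp
  rw [sq_sqrt hρ.le]

lemma hasDerivAt_centralProjH_comp_timeChange {p : ℝ → ℝ × ℝ} {t : ℝ → ℝ} {v : ℝ × ℝ} {τ : ℝ}
    (hρ : 0 < discWeight (p (t τ))) (hp : HasDerivAt p v (t τ))
    (ht : HasDerivAt t (discWeight (p (t τ))) τ) :
    HasDerivAt (fun τ => centralProjH (p (t τ)))
      (√(discWeight (p (t τ))) • liftPlane v
        + planeDot (p (t τ)) v • centralProjH (p (t τ))) τ := by
  refine ((hasDerivAt_centralProjH hp hρ).scomp τ ht).congr_deriv ?_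
  have hσ := sqrt_pos.2 hρ
  rw [smul_add, smul_smul, smul_smul, mul_div_cancel₀ _ hρ.ne']
  congr 2
  field_simp
  rw [sq_sqrt hρ.le]

lemma hasDerivAt_centralProjH_velocity {p p' : ℝ → ℝ × ℝ} {w : ℝ × ℝ} {s : ℝ}
    (hρ : 0 < discWeight (p s)) (hp : HasDerivAt p (p' s) s) (hp' : HasDerivAt p' w s) :
    HasDerivAt
      (fun s => √(discWeight (p s)) • liftPlane (p' s) + planeDot (p s) (p' s) • centralProjH (p s))
      (√(discWeight (p s)) • liftPlane w
        + (planeDot (p' s) (p' s) + planeDot (p s) w + planeDot (p s) (p' s) ^ 2 / discWeight (p s))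
          • centralProjH (p s)) s := by
  have hσ := sqrt_pos.2 hρ
  refine (((hasDerivAt_sqrt_discWeight hp hρ).smul
      (liftPlane.hasFDerivAt.comp_hasDerivAt s hp')).add
    ((hp.planeDot hp').smul (hasDerivAt_centralProjH hp hρ))).congr_deriv ?_
  simp only [Function.comp_apply, smul_add, smul_smul, add_smul]
  rw [← sq_sqrt hρ.le]
  module

lemma exists_deriv_deriv_centralProjH_comp_timeChange {p : ℝ → ℝ × ℝ} {t : ℝ → ℝ}
    (hρ : ∀ s, 0 < discWeight (p s)) (hp : Differentiable ℝ p)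
    (hp' : Differentiable ℝ (deriv p)) (ht : ∀ τ, HasDerivAt t (discWeight (p (t τ))) τ)
    (τ : ℝ) :
    ∃ G : ℝ, deriv (deriv fun τ => centralProjH (p (t τ))) τ
      = √(discWeight (p (t τ))) ^ 3 • liftPlane (deriv (deriv p) (t τ))
        + G • centralProjH (p (t τ)) := by
  set V := fun s =>
    √(discWeight (p s)) • liftPlane (deriv p s) + planeDot (p s) (deriv p s) • centralProjH (p s)
  have hvel : deriv (fun τ => centralProjH (p (t τ))) = V ∘ t := funext fun τ =>
    (hasDerivAt_centralProjH_comp_timeChange (hρ _) (hp _).hasDerivAt (ht τ)).deriv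
  have hacc := (hasDerivAt_centralProjH_velocity (hρ (t τ)) (hp (t τ)).hasDerivAt
    (hp' (t τ)).hasDerivAt).scomp τ (ht τ)
  rw [hvel, hacc.deriv, smul_add, smul_smul, smul_smul]
  refine ⟨_, congrArg₂ (· + ·) (congrArg (· • _) ?_) rfl⟩
  linear_combination (-√(discWeight (p (t τ)))) * sq_sqrt (hρ (t τ)).le

/-- The central projection carries solutions of the planar Lagrange problem to
solutions of the hyperbolic Lagrange problem with force function
`m̂₁ coth θ_{Z₁} + m̂₂ coth θ_{Z₂} + f tanh² θ_{Z₀}`. -/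
theorem lagrange_central_projection_hyperbolic
    (a : ℝ) (ha₁ : -1 < a) (ha₂ : a < 1)
    (m₁ m₂ f mhat₁ mhat₂ : ℝ)
    (hm₁ : mhat₁ = Real.sqrt (1 - a ^ 2) * m₁)
    (hm₂ : mhat₂ = Real.sqrt (1 - a ^ 2) * m₂)
    (Zt₁ Zt₂ : ℝ × ℝ) (hZt₁ : Zt₁ = (0, a)) (hZt₂ : Zt₂ = (0, -a))
    (Z₁ Z₂ Z0 : ℝ × ℝ × ℝ)
    (hZ₁ : Z₁ = (Real.sqrt (1 - a ^ 2))⁻¹ • ((0 : ℝ), a, (-1 : ℝ)))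
    (hZ₂ : Z₂ = (Real.sqrt (1 - a ^ 2))⁻¹ • ((0 : ℝ), -a, (-1 : ℝ)))
    (hZ0 : Z0 = ((0 : ℝ), (0 : ℝ), (-1 : ℝ)))
    (qt : ℝ → ℝ × ℝ)
    (hdisc : ∀ s, (qt s).1 ^ 2 + (qt s).2 ^ 2 < 1)
    (hne₁ : ∀ s, qt s ≠ Zt₁) (hne₂ : ∀ s, qt s ≠ Zt₂)
    (hC2 : ContDiff ℝ 2 qt)
    (hODE : ∀ s, deriv (deriv qt) s
        = -(m₁ / (normAm a (qt s - Zt₁)) ^ 3) • (qt s - Zt₁)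
          - (m₂ / (normAm a (qt s - Zt₂)) ^ 3) • (qt s - Zt₂)
          + (2 * f) • qt s)
    (t : ℝ → ℝ)
    (ht : ∀ τ, HasDerivAt t (1 - (qt (t τ)).1 ^ 2 - (qt (t τ)).2 ^ 2) τ)
    (q : ℝ → ℝ × ℝ × ℝ) (hq : q = fun τ => centralProjH (qt (t τ))) :
    ∀ τ, deriv (deriv q) τ + eta (deriv (deriv q) τ) (q τ) • q τ
      = (mhat₁ * (eta (q τ) Z₁ ^ 2 - 1) ^ (-(3 : ℝ) / 2)) •
          (Z₁ + eta (q τ) Z₁ • q τ)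
        + (mhat₂ * (eta (q τ) Z₂ ^ 2 - 1) ^ (-(3 : ℝ) / 2)) •
          (Z₂ + eta (q τ) Z₂ • q τ)
        + (2 * f / (eta (q τ) Z0) ^ 3) • (Z0 + eta (q τ) Z0 • q τ) := by
  subst hm₁ hm₂ hZt₁ hZt₂ hZ₁ hZ₂ hZ0 hq
  intro τ
  have ha : a ^ 2 < 1 := by nlinarith
  have hρ : ∀ s, 0 < discWeight (qt s) := fun s => by unfold discWeight; linarith [hdisc s]
  obtain ⟨G, hacc⟩ := exists_deriv_deriv_centralProjH_comp_timeChange hρ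
    (hC2.differentiable (by norm_num)) hC2.differentiable_deriv_two ht τ
  have hkepler₁ := tangentProj_liftPlane_keplerTerm ha (hρ (t τ)) (hne₁ (t τ)) m₁
  have hkepler₂ := tangentProj_liftPlane_keplerTerm (b := -a) (by rwa [neg_sq]) (hρ (t τ))
    (hne₂ (t τ)) m₂
  have hhooke := tangentProj_liftPlane_hookeTerm (hρ (t τ)) (2 * f)
  rw [centralProjH_axis] at hkepler₁ hkepler₂
  rw [neg_sq, normAm_neg] at hkepler₂
  simp only [← tangentProj_apply, ← tangentProj_apply_comm]
  rw [hacc, map_add, map_smul, map_smul, tangentProj_self (eta_centralProjH_self (hρ _)),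
    smul_zero, add_zero, hODE, neg_smul, map_add, map_sub, map_neg, map_add, map_sub, map_neg,
    smul_add, smul_sub, smul_neg, hkepler₁, hkepler₂, hhooke, neg_neg, sub_neg_eq_add]
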